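/- Let u : ℝ → ℝ be continuous, even, nonnegative with compact support, unit integral, and supp u ⊆ [−R,R]. Let u_ε(x)=(1/ε)u(x/ε) and F^ε = I_d[abs * u_ε]. Then F^ε(s) = ε F¹(s/ε) where F¹ = I_d[abs*u], and ‖F^ε − C_d abs‖_{L²(ℝ)}² ≤ ε³ ‖F¹ − C_d abs‖_{L²}²; in particular F^ε → C_d·abs in L²(ℝ) and pointwise as ε → 0. -/

import Mathlib

open MeasureTheory Filter

/-- Surface area of the unit sphere `S^k ⊆ ℝ^(k+1)`. -/
noncomputable def sphArea (k : ℕ) : ℝ :=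
  2 * Real.pi ^ (((k : ℝ) + 1) / 2) / Real.Gamma (((k : ℝ) + 1) / 2)

/-- The Riemann--Liouville fractional integral operator `I_d`. -/
noncomputable def RL (d : ℕ) (f : ℝ → ℝ) (s : ℝ) : ℝ :=
  (2 * sphArea (d - 2) / sphArea (d - 1)) *
    ∫ t in (0:ℝ)..1, f (t * s) * (1 - t ^ 2) ^ (((d : ℝ) - 3) / 2)

/-- The constant `C_d = Γ(d/2)/(√π Γ((d+1)/2))`. -/
noncomputable def Cd (d : ℕ) : ℝ :=
  Real.Gamma ((d : ℝ) / 2) / (Real.sqrt Real.pi * Real.Gamma (((d : ℝ) + 1) / 2))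

/-!
Everything rests on the homogeneity of `|·|`. Substituting `y = ε z` shows that `|·| * u_ε` is the
dilation `x ↦ ε (|·| * u)(x / ε)`, and `I_d` commutes with dilations, so
`F^ε(s) - C_d |s| = ε (F¹(s / ε) - C_d |s / ε|)`; squaring and substituting `s = ε σ` gives the
factor `ε³`. Since `C_d |s| = I_d[|·|](s)` and `|(|·| * u)(x) - |x|| ≤ ∫ |y| u(y) dy`, the error
`F¹ - C_d |·|` is bounded, hence `F^ε(s) - C_d |s| = O(ε)` pointwise.
-/

lemma intervalIntegrable_one_sub_sq_rpow {α : ℝ} (hα : -1 < α) :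
    IntervalIntegrable (fun t : ℝ => (1 - t ^ 2) ^ α) volume 0 1 := by
  have h_left : IntervalIntegrable (fun t : ℝ => (1 - t) ^ α) volume 0 1 := by
    simpa using
      ((intervalIntegral.intervalIntegrable_rpow' (a := 0) (b := 1) hα).comp_sub_left 1).symm
  have h_right : ContinuousOn (fun t : ℝ => (1 + t) ^ α) (Set.uIcc 0 1) := by
    refine ContinuousOn.rpow_const (by fun_prop) fun t ht => Or.inl ?_
    rw [Set.uIcc_of_le zero_le_one] at ht
    linarith [ht.1]
  refine (h_left.continuousOn_mul h_right).congr fun t ht => ?_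
  rw [Set.uIoc_of_le zero_le_one] at ht
  rw [← Real.mul_rpow (by linarith [ht.1]) (by linarith [ht.2])]
  ring_nf

lemma integral_mul_one_sub_sq_rpow {α : ℝ} (hα : -1 < α) :
    ∫ t in (0:ℝ)..1, t * (1 - t ^ 2) ^ α = 1 / (2 * (α + 1)) := by
  have hα1 : 0 < α + 1 := by linarith
  set G : ℝ → ℝ := fun t => -(1 - t ^ 2) ^ (α + 1) / (2 * (α + 1)) with hG
  have hG_cont : ContinuousOn G (Set.Icc 0 1) :=
    ((ContinuousOn.rpow_const (by fun_prop) fun _ _ => Or.inr hα1.le).neg).div_const _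
  have hG_deriv : ∀ x ∈ Set.Ioo (0:ℝ) 1,
      HasDerivWithinAt G (x * (1 - x ^ 2) ^ α) (Set.Ioi x) x := by
    intro x hx
    have hbase : (1:ℝ) - x ^ 2 ≠ 0 := by nlinarith [hx.1, hx.2]
    have h := ((((hasDerivAt_pow 2 x).const_sub 1).rpow_const (p := α + 1)
      (Or.inl hbase)).neg).div_const (2 * (α + 1))
    refine (h.congr_deriv ?_).hasDerivWithinAt
    rw [add_sub_cancel_right]
    field_simp
    ring
  rw [intervalIntegral.integral_eq_sub_of_hasDeriv_right_of_le zero_le_one hG_cont hG_deriv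
    ((intervalIntegrable_one_sub_sq_rpow hα).continuousOn_mul (by fun_prop))]
  simp only [hG, one_pow, sub_self, Real.zero_rpow hα1.ne', ne_eq, OfNat.ofNat_ne_zero,
    not_false_eq_true, zero_pow, sub_zero, Real.one_rpow]
  ring

lemma Cd_eq_sphArea {d : ℕ} (hd : 2 ≤ d) :
    Cd d = 2 * sphArea (d - 2) / sphArea (d - 1) / ((d : ℝ) - 1) := by
  have hd2 : (2:ℝ) ≤ d := by exact_mod_cast hd
  have hx : (0:ℝ) < ((d:ℝ) - 1) / 2 := by linarith
  rw [sphArea, sphArea, Cd, Nat.cast_sub hd, Nat.cast_sub (one_le_two.trans hd), Nat.cast_ofNat,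
    Nat.cast_one, show ((d:ℝ) - 2 + 1) / 2 = ((d:ℝ) - 1) / 2 by ring,
    show ((d:ℝ) - 1 + 1) / 2 = ((d:ℝ) - 1) / 2 + 1 / 2 by ring,
    show (d:ℝ) / 2 = ((d:ℝ) - 1) / 2 + 1 / 2 by ring,
    show ((d:ℝ) + 1) / 2 = ((d:ℝ) - 1) / 2 + 1 by ring,
    Real.Gamma_add_one hx.ne', Real.rpow_add Real.pi_pos, ← Real.sqrt_eq_rpow]
  have hG1 := Real.Gamma_pos_of_pos hx
  have hG2 := Real.Gamma_pos_of_pos (by linarith : (0:ℝ) < ((d:ℝ) - 1) / 2 + 1 / 2)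
  have hπ := Real.rpow_pos_of_pos Real.pi_pos (((d:ℝ) - 1) / 2)
  have hsqrtπ := Real.sqrt_pos.mpr Real.pi_pos
  field_simp

lemma RL_abs {d : ℕ} (hd : 2 ≤ d) (s : ℝ) : RL d (fun x => |x|) s = Cd d * |s| := by
  have hd2 : (2:ℝ) ≤ d := by exact_mod_cast hd
  have hα : (-1:ℝ) < ((d:ℝ) - 3) / 2 := by linarith
  have habs : ∫ t in (0:ℝ)..1, |t * s| * (1 - t ^ 2) ^ (((d : ℝ) - 3) / 2)
      = |s| * ∫ t in (0:ℝ)..1, t * (1 - t ^ 2) ^ (((d : ℝ) - 3) / 2) := by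
    rw [← intervalIntegral.integral_const_mul]
    refine intervalIntegral.integral_congr fun t ht => ?_
    rw [Set.uIcc_of_le zero_le_one] at ht
    simp only [abs_mul, abs_of_nonneg ht.1]
    ring
  rw [RL, habs, integral_mul_one_sub_sq_rpow hα, Cd_eq_sphArea hd]
  field_simp
  ring

lemma abs_RL_sub_RL_le {d : ℕ} (hd : 2 ≤ d) {f g : ℝ → ℝ} (hf : Continuous f)
    (hg : Continuous g) {M : ℝ} (hfg : ∀ x, |f x - g x| ≤ M) (s : ℝ) :
    |RL d f s - RL d g s| ≤
      |2 * sphArea (d - 2) / sphArea (d - 1)| *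
        (M * ∫ t in (0:ℝ)..1, (1 - t ^ 2) ^ (((d : ℝ) - 3) / 2)) := by
  have hd2 : (2:ℝ) ≤ d := by exact_mod_cast hd
  have hw := intervalIntegrable_one_sub_sq_rpow (by linarith : (-1:ℝ) < ((d:ℝ) - 3) / 2)
  have hint : ∀ {h : ℝ → ℝ}, Continuous h → IntervalIntegrable
      (fun t => h (t * s) * (1 - t ^ 2) ^ (((d : ℝ) - 3) / 2)) volume 0 1 := fun hh =>
    hw.continuousOn_mul (hh.comp (continuous_mul_const s)).continuousOn
  rw [RL, RL, ← mul_sub, abs_mul, ← intervalIntegral.integral_sub (hint hf) (hint hg),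
    ← intervalIntegral.integral_const_mul]
  gcongr
  rw [← Real.norm_eq_abs]
  refine intervalIntegral.norm_integral_le_of_norm_le zero_le_one
    (ae_of_all _ fun t ht => ?_) (hw.const_mul M)
  have hw0 : 0 ≤ (1 - t ^ 2) ^ (((d : ℝ) - 3) / 2) :=
    Real.rpow_nonneg (by nlinarith [ht.1, ht.2]) _
  rw [Real.norm_eq_abs, ← sub_mul, abs_mul, abs_of_nonneg hw0]
  exact mul_le_mul_of_nonneg_right (hfg _) hw0

lemma RL_dilate (d : ℕ) (f : ℝ → ℝ) (ε s : ℝ) :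
    RL d (fun x => ε * f (x / ε)) s = ε * RL d f (s / ε) := by
  simp only [RL, mul_div_assoc, mul_assoc, intervalIntegral.integral_const_mul]
  ring

lemma integral_sq_dilate (g : ℝ → ℝ) {ε : ℝ} (hε : 0 < ε) :
    ∫ s, (ε * g (s / ε)) ^ 2 = ε ^ 3 * ∫ s, g s ^ 2 := by
  simp only [mul_pow]
  rw [integral_const_mul, Measure.integral_comp_div (fun s => g s ^ 2), abs_of_pos hε,
    smul_eq_mul]
  ring

lemma integral_abs_sub_mul_dilate (u : ℝ → ℝ) {ε : ℝ} (hε : 0 < ε) (x : ℝ) :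
    ∫ y, |x - y| * ((1 / ε) * u (y / ε)) = ε * ∫ z, |x / ε - z| * u z := by
  have h : ∀ y, |x - y| * ((1 / ε) * u (y / ε)) = |x / ε - y / ε| * u (y / ε) := fun y => by
    rw [div_sub_div_same, abs_div, abs_of_pos hε]
    ring
  simp only [h]
  rw [Measure.integral_comp_div (fun z => |x / ε - z| * u z), abs_of_pos hε, smul_eq_mul]

lemma abs_integral_mul_sub_integral_mul_le {u a b c : ℝ → ℝ} (hu : ∀ y, 0 ≤ u y)
    (ha : Integrable fun y => a y * u y) (hb : Integrable fun y => b y * u y)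
    (hc : Integrable fun y => c y * u y) (habc : ∀ y, |a y - b y| ≤ c y) :
    |(∫ y, a y * u y) - ∫ y, b y * u y| ≤ ∫ y, c y * u y := by
  rw [← integral_sub ha hb, ← Real.norm_eq_abs]
  refine norm_integral_le_of_norm_le hc (ae_of_all _ fun y => ?_)
  rw [Real.norm_eq_abs, ← sub_mul, abs_mul, abs_of_nonneg (hu y)]
  exact mul_le_mul_of_nonneg_right (habc y) (hu y)

lemma integrable_mul_of_hasCompactSupport {a u : ℝ → ℝ} (ha : Continuous a) (hu : Continuous u)
    (hsupp : HasCompactSupport u) : Integrable fun y => a y * u y :=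
  (ha.mul hu).integrable_of_hasCompactSupport hsupp.mul_left

section AbsConvolution

variable {u : ℝ → ℝ} (hcont : Continuous u) (hnonneg : ∀ x, 0 ≤ u x)
  (hsupp : HasCompactSupport u) (hint : ∫ x, u x = 1)
include hcont hnonneg hsupp hint

lemma lipschitzWith_integral_abs_sub_mul :
    LipschitzWith 1 (fun x => ∫ y, |x - y| * u y) := by
  have hi {a : ℝ → ℝ} (ha : Continuous a) := integrable_mul_of_hasCompactSupport ha hcont hsupp
  refine LipschitzWith.of_dist_le_mul fun x x' => ?_
  rw [NNReal.coe_one, one_mul, Real.dist_eq, Real.dist_eq]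
  calc |(∫ y, |x - y| * u y) - ∫ y, |x' - y| * u y|
      ≤ ∫ y, |x - x'| * u y :=
        abs_integral_mul_sub_integral_mul_le hnonneg (hi (by fun_prop)) (hi (by fun_prop))
          (hi continuous_const) fun y => by simpa using abs_abs_sub_abs_le_abs_sub (x - y) (x' - y)
    _ = |x - x'| := by rw [integral_const_mul, hint, mul_one]

lemma abs_integral_abs_sub_mul_sub_abs_le (x : ℝ) :
    |(∫ y, |x - y| * u y) - (|x|)| ≤ ∫ y, |y| * u y := by
  have hi {a : ℝ → ℝ} (ha : Continuous a) := integrable_mul_of_hasCompactSupport ha hcont hsupp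
  have hx : |x| = ∫ y, |x| * u y := by rw [integral_const_mul, hint, mul_one]
  conv_lhs => rw [hx]
  exact abs_integral_mul_sub_integral_mul_le hnonneg (hi (by fun_prop)) (hi continuous_const)
    (hi continuous_abs) fun y => by simpa using abs_abs_sub_abs_le_abs_sub (x - y) x

end AbsConvolution

theorem stmt_15_general (d : ℕ) (hd : 2 ≤ d) (u : ℝ → ℝ) (hcont : Continuous u)
    (hnonneg : ∀ x, 0 ≤ u x)
    (hsupp : HasCompactSupport u) (hint : ∫ x, u x = 1) :
    (∀ ε : ℝ, 0 < ε →
      (∀ s : ℝ, RL d (fun x => ∫ y, |x - y| * ((1 / ε) * u (y / ε))) s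
          = ε * RL d (fun x => ∫ y, |x - y| * u y) (s / ε)) ∧
      (∫ s : ℝ, (RL d (fun x => ∫ y, |x - y| * ((1 / ε) * u (y / ε))) s - Cd d * |s|) ^ 2)
        ≤ ε ^ 3 * ∫ s : ℝ, (RL d (fun x => ∫ y, |x - y| * u y) s - Cd d * |s|) ^ 2) ∧
    Tendsto (fun ε : ℝ =>
        ∫ s : ℝ, (RL d (fun x => ∫ y, |x - y| * ((1 / ε) * u (y / ε))) s - Cd d * |s|) ^ 2)
      (nhdsWithin 0 (Set.Ioi 0)) (nhds 0) ∧
    (∀ s : ℝ, Tendsto (fun ε : ℝ =>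
        RL d (fun x => ∫ y, |x - y| * ((1 / ε) * u (y / ε))) s)
      (nhdsWithin 0 (Set.Ioi 0)) (nhds (Cd d * |s|))) := by
  have hscale : ∀ ε, 0 < ε → ∀ s, RL d (fun x => ∫ y, |x - y| * ((1 / ε) * u (y / ε))) s
      = ε * RL d (fun x => ∫ y, |x - y| * u y) (s / ε) := fun ε hε s => by
    simp only [integral_abs_sub_mul_dilate u hε]
    exact RL_dilate d (fun x => ∫ y, |x - y| * u y) ε s
  have herr : ∀ ε, 0 < ε → ∀ s,
      RL d (fun x => ∫ y, |x - y| * ((1 / ε) * u (y / ε))) s - Cd d * |s|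
        = ε * (RL d (fun x => ∫ y, |x - y| * u y) (s / ε) - Cd d * |s / ε|) := fun ε hε s => by
    rw [hscale ε hε, abs_div, abs_of_pos hε]
    field_simp
  have hL2 : ∀ ε, 0 < ε →
      (∫ s, (RL d (fun x => ∫ y, |x - y| * ((1 / ε) * u (y / ε))) s - Cd d * |s|) ^ 2)
        = ε ^ 3 * ∫ s, (RL d (fun x => ∫ y, |x - y| * u y) s - Cd d * |s|) ^ 2 :=
    fun ε hε => by
      simp only [herr ε hε]
      exact integral_sq_dilate (fun s => RL d (fun x => ∫ y, |x - y| * u y) s - Cd d * |s|) hε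
  obtain ⟨K, hK⟩ : ∃ K, ∀ σ, |RL d (fun x => ∫ y, |x - y| * u y) σ - Cd d * (|σ|)| ≤ K :=
    ⟨_, fun σ => RL_abs hd σ ▸ abs_RL_sub_RL_le hd
      (lipschitzWith_integral_abs_sub_mul hcont hnonneg hsupp hint).continuous continuous_abs
      (abs_integral_abs_sub_mul_sub_abs_le hcont hnonneg hsupp hint) σ⟩
  refine ⟨fun ε hε => ⟨hscale ε hε, (hL2 ε hε).le⟩, ?_, fun s => ?_⟩
  · refine (tendsto_nhdsWithin_of_tendsto_nhds ?_).congr' <|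
      eventually_nhdsWithin_of_forall fun ε hε => (hL2 ε hε).symm
    simpa using ((continuous_pow 3).tendsto (0:ℝ)).mul_const _
  · rw [← tendsto_sub_nhds_zero_iff]
    refine squeeze_zero_norm' (a := fun ε => ε * K) ?_ <|
      tendsto_nhdsWithin_of_tendsto_nhds ?_
    · filter_upwards [self_mem_nhdsWithin] with ε (hε : 0 < ε)
      rw [herr ε hε, norm_mul, Real.norm_of_nonneg hε.le, Real.norm_eq_abs]
      exact mul_le_mul_of_nonneg_left (hK _) hε.le
    · simpa using (continuous_id.tendsto (0:ℝ)).mul_const K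

theorem stmt_15 (d : ℕ) (hd : 2 ≤ d) (u : ℝ → ℝ) (hcont : Continuous u)
    (heven : ∀ x, u (-x) = u x) (hnonneg : ∀ x, 0 ≤ u x)
    (hsupp : HasCompactSupport u) (hint : ∫ x, u x = 1)
    (R : ℝ) (hR : Function.support u ⊆ Set.Icc (-R) R) :
    (∀ ε : ℝ, 0 < ε →
      (∀ s : ℝ, RL d (fun x => ∫ y, |x - y| * ((1 / ε) * u (y / ε))) s
          = ε * RL d (fun x => ∫ y, |x - y| * u y) (s / ε)) ∧
      (∫ s : ℝ, (RL d (fun x => ∫ y, |x - y| * ((1 / ε) * u (y / ε))) s - Cd d * |s|) ^ 2)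
        ≤ ε ^ 3 * ∫ s : ℝ, (RL d (fun x => ∫ y, |x - y| * u y) s - Cd d * |s|) ^ 2) ∧
    Tendsto (fun ε : ℝ =>
        ∫ s : ℝ, (RL d (fun x => ∫ y, |x - y| * ((1 / ε) * u (y / ε))) s - Cd d * |s|) ^ 2)
      (nhdsWithin 0 (Set.Ioi 0)) (nhds 0) ∧
    (∀ s : ℝ, Tendsto (fun ε : ℝ =>
        RL d (fun x => ∫ y, |x - y| * ((1 / ε) * u (y / ε))) s)
      (nhdsWithin 0 (Set.Ioi 0)) (nhds (Cd d * |s|))) :=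
  stmt_15_general d hd u hcont hnonneg hsupp hint
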